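/- (Risky-distance safety with reaction time.) Let a > 0, s > 0, c_r ≥ 0, and speeds v̂, v with 0 ≤ v̂ ≤ v ≤ 2·v̂. Suppose the leader moves at constant speed, P(t) = P₀ + v̂·t, and the follower first keeps its speed v for a reaction time τ = c_r·v/a (p(t) = p₀ + v·t on [0, τ]), then decelerates at rate a until its speed equals v̂ (p(t) = p(τ) + v·(t−τ) − (a/2)(t−τ)² on [τ, τ + (v−v̂)/a]), and thereafter moves at constant speed v̂. If the initial gap satisfies P₀ − p₀ ≥ s + c_r·v·v̂/a + (v − v̂)²/(2a), then P(t) − p(t) ≥ s for all t ≥ 0. -/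

import Mathlib

/-- Trajectory of the follower with reaction time: initial position `p₀`, initial
speed `v`; it keeps speed `v` during the reaction time `τ = c_r·v/a`, then brakes at
rate `a` until its speed equals the leader speed `v̂`, and thereafter moves at
constant speed `v̂`. -/
noncomputable def followerTraj (a cr p0 v vhat t : ℝ) : ℝ :=
  let τ := cr * v / a
  let t1 := τ + (v - vhat) / a
  if t ≤ τ then p0 + v * t
  else if t ≤ t1 then p0 + v * τ + v * (t - τ) - (a/2) * (t - τ)^2
  else p0 + v * τ + v * (t1 - τ) - (a/2) * (t1 - τ)^2 + vhat * (t - t1)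

/-!
Relative to a point moving at the leader's speed `v̂`, the follower gains `(v - v̂)·τ`
during the reaction time and at most `(v - v̂)²/(2a)` while braking, with equality once
the speeds match; afterwards it gains nothing. Since `v ≤ 2v̂`, the first gain is at
most `v̂·τ = c_r·v·v̂/a`, so the initial gap covers the total loss.
-/

lemma mul_sub_half_mul_sq_le {a : ℝ} (ha : 0 < a) (d u : ℝ) :
    d * u - a / 2 * u ^ 2 ≤ d ^ 2 / (2 * a) := by
  rw [le_div_iff₀ (by positivity)]
  nlinarith [sq_nonneg (d - a * u)]

lemma followerTraj_sub_le {a : ℝ} (ha : 0 < a) {v vhat : ℝ} (hvv : vhat ≤ v)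
    (cr p0 t : ℝ) :
    followerTraj a cr p0 v vhat t - (p0 + vhat * t)
      ≤ (v - vhat) * (cr * v / a) + (v - vhat) ^ 2 / (2 * a) := by
  set τ := cr * v / a
  set D := (v - vhat) / a with hD
  have hsq : 0 ≤ (v - vhat) ^ 2 / (2 * a) := by positivity
  simp only [followerTraj]
  split_ifs with hreact
  · linarith [mul_le_mul_of_nonneg_left hreact (sub_nonneg.2 hvv)]
  · linarith [mul_sub_half_mul_sq_le ha (v - vhat) (t - τ)]
  · have hfull : (v - vhat) * D - a / 2 * D ^ 2 = (v - vhat) ^ 2 / (2 * a) := by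
      rw [hD]; field_simp; ring
    linarith

theorem risky_distance_safety_general (a s cr P0 p0 vhat v : ℝ)
    (ha : 0 < a) (hcr : 0 ≤ cr)
    (hvhat : 0 ≤ vhat) (hvv : vhat ≤ v) (hv2 : v ≤ 2 * vhat)
    (hgap : P0 - p0 ≥ s + cr * v * vhat / a + (v - vhat)^2 / (2*a)) :
    ∀ t ≥ (0:ℝ), (P0 + vhat * t) - followerTraj a cr p0 v vhat t ≥ s := by
  intro t _
  have hτ : 0 ≤ cr * v / a := by have := hvhat.trans hvv; positivity
  have hreact : (v - vhat) * (cr * v / a) ≤ cr * v * vhat / a := by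
    calc (v - vhat) * (cr * v / a) ≤ vhat * (cr * v / a) :=
          mul_le_mul_of_nonneg_right (by linarith) hτ
      _ = cr * v * vhat / a := by ring
  linarith [followerTraj_sub_le ha hvv cr p0 t]

/-- Risky-distance safety with reaction time: with speeds `0 ≤ v̂ ≤ v ≤ 2·v̂`,
a leader moving at constant speed `v̂` from `P₀`, and a follower with reaction time
`τ = c_r·v/a` as above, an initial gap of at least
`s + c_r·v·v̂/a + (v − v̂)²/(2a)` guarantees that the gap never drops below `s`. -/
theorem risky_distance_safety (a s cr P0 p0 vhat v : ℝ)
    (ha : 0 < a) (hs : 0 < s) (hcr : 0 ≤ cr)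
    (hvhat : 0 ≤ vhat) (hvv : vhat ≤ v) (hv2 : v ≤ 2 * vhat)
    (hgap : P0 - p0 ≥ s + cr * v * vhat / a + (v - vhat)^2 / (2*a)) :
    ∀ t ≥ (0:ℝ), (P0 + vhat * t) - followerTraj a cr p0 v vhat t ≥ s :=
  risky_distance_safety_general a s cr P0 p0 vhat v ha hcr hvhat hvv hv2 hgap
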